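/- arXiv:0909.5685 — 11 statements merged into one kernel-verified Lean document; each statement's English description precedes it below -/
import Mathlib

section
/- Let v, w : ℝ⁶ → ℝ be continuously differentiable functions of the variables (t,x,y,z,s,r). Then the following are equivalent: (i) for every λ ∈ ℝ the pair of vector fields X = ∂_z − v∂_s − λ∂_x + λv∂_r and Y = ∂_y − w∂_s − λ∂_t + λw∂_r commutes, i.e. at every point w_z − v w_s − λ w_x + λ v w_r = v_y − w v_s − λ v_t + λ w v_r; (ii) the pair (v,w) solves the system (ma): v_t = w_x + w v_r − v w_r and w_z = v_y + v w_s − w v_s. (Here subscripts denote partial derivatives.) -/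
/-- Partial derivative of `f : ℝⁿ → ℝ` in the `i`-th coordinate direction. -/
noncomputable def pd {n : ℕ} (i : Fin n) (f : (Fin n → ℝ) → ℝ) (x : Fin n → ℝ) : ℝ :=
  fderiv ℝ f x (Pi.single i 1)

theorem forall_add_mul_eq_add_mul_iff {R : Type*} [Ring R] {a b c d : R} :
    (∀ lam : R, a + lam * b = c + lam * d) ↔ a = c ∧ b = d := by
  refine ⟨fun h => ?_, fun ⟨hac, hbd⟩ _ => by rw [hac, hbd]⟩
  have hac : a = c := by simpa using h 0
  exact ⟨hac, by simpa [hac] using h 1⟩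

/-- Coordinates on ℝ⁶ are `(t,x,y,z,s,r)` with indices `(0,1,2,3,4,5)`. -/
theorem stmt0_general (v w : (Fin 6 → ℝ) → ℝ) :
    (∀ (lam : ℝ) (x : Fin 6 → ℝ),
        pd 3 w x - v x * pd 4 w x - lam * pd 1 w x + lam * v x * pd 5 w x =
        pd 2 v x - w x * pd 4 v x - lam * pd 0 v x + lam * w x * pd 5 v x) ↔
    (∀ x : Fin 6 → ℝ,
        pd 0 v x = pd 1 w x + w x * pd 5 v x - v x * pd 5 w x ∧
        pd 3 w x = pd 2 v x + v x * pd 4 w x - w x * pd 4 v x) := by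
  rw [forall_comm]
  refine forall_congr' fun x => ?_
  calc
    _ ↔ ∀ lam : ℝ, (pd 3 w x - v x * pd 4 w x) + lam * (v x * pd 5 w x - pd 1 w x) =
          (pd 2 v x - w x * pd 4 v x) + lam * (w x * pd 5 v x - pd 0 v x) :=
      forall_congr' fun _ => by constructor <;> intro h <;> linear_combination h
    _ ↔ _ := forall_add_mul_eq_add_mul_iff
    _ ↔ _ := by constructor <;> rintro ⟨h₁, h₂⟩ <;> constructor <;> linarith

/-- Coordinates on ℝ⁶ are `(t,x,y,z,s,r)` with indices `(0,1,2,3,4,5)`.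
For C¹ functions `v, w : ℝ⁶ → ℝ`, the vector fields
`X = ∂_z − v∂_s − λ∂_x + λv∂_r` and `Y = ∂_y − w∂_s − λ∂_t + λw∂_r` commute for every `λ`
iff `(v,w)` solves the system (ma): `v_t = w_x + w v_r − v w_r`, `w_z = v_y + v w_s − w v_s`. -/
theorem stmt0 (v w : (Fin 6 → ℝ) → ℝ) (hv : ContDiff ℝ 1 v) (hw : ContDiff ℝ 1 w) :
    (∀ (lam : ℝ) (x : Fin 6 → ℝ),
        pd 3 w x - v x * pd 4 w x - lam * pd 1 w x + lam * v x * pd 5 w x =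
        pd 2 v x - w x * pd 4 v x - lam * pd 0 v x + lam * w x * pd 5 v x) ↔
    (∀ x : Fin 6 → ℝ,
        pd 0 v x = pd 1 w x + w x * pd 5 v x - v x * pd 5 w x ∧
        pd 3 w x = pd 2 v x + v x * pd 4 w x - w x * pd 4 v x) :=
  stmt0_general v w
end

section
/- For (v,w) ∈ ℝ² with v ≠ w, define the 2×2 matrices A = diag(w, v), B₁ = (w−v)⁻¹·[[1, 1], [−1, −1]], B₂ = (w−v)⁻¹·[[w, v], [−w, −v]], B₃ = (w−v)⁻¹·[[w², v²], [−w², −v²]], B₄ = (w−v)⁻¹·[[v w², v³], [−w³, −w v²]]. Then for all real constants c₀, c₁, c₂, c₃, c₄, the matrix-valued function M(v,w) = c₀A + c₁B₁ + c₂B₂ + c₃B₃ + c₄B₄ satisfies the 2×2 linear degeneracy criterion at every point (v,w) with v ≠ w: for k = 1, 2, Σ_{j=1}^{2} (∂f₁/∂u^j) M_{jk} + ∂f₂/∂u^k = 0, where (u¹,u²) = (v,w), f₁ = −tr M and f₂ = det M. -/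
open Matrix

/-- `A = diag(w, v)`. -/
noncomputable def Amat (v w : ℝ) : Matrix (Fin 2) (Fin 2) ℝ := !![w, 0; 0, v]

/-- `B₁ = (w−v)⁻¹ [[1,1],[−1,−1]]`. -/
noncomputable def B1mat (v w : ℝ) : Matrix (Fin 2) (Fin 2) ℝ := (w - v)⁻¹ • !![1, 1; -1, -1]

/-- `B₂ = (w−v)⁻¹ [[w,v],[−w,−v]]`. -/
noncomputable def B2mat (v w : ℝ) : Matrix (Fin 2) (Fin 2) ℝ := (w - v)⁻¹ • !![w, v; -w, -v]

/-- `B₃ = (w−v)⁻¹ [[w²,v²],[−w²,−v²]]`. -/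
noncomputable def B3mat (v w : ℝ) : Matrix (Fin 2) (Fin 2) ℝ :=
  (w - v)⁻¹ • !![w ^ 2, v ^ 2; -(w ^ 2), -(v ^ 2)]

/-- `B₄ = (w−v)⁻¹ [[vw²,v³],[−w³,−wv²]]`. -/
noncomputable def B4mat (v w : ℝ) : Matrix (Fin 2) (Fin 2) ℝ :=
  (w - v)⁻¹ • !![v * w ^ 2, v ^ 3; -(w ^ 3), -(w * v ^ 2)]

/-- `M = c₀A + c₁B₁ + c₂B₂ + c₃B₃ + c₄B₄`. -/
noncomputable def Mmat (c0 c1 c2 c3 c4 v w : ℝ) : Matrix (Fin 2) (Fin 2) ℝ :=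
  c0 • Amat v w + c1 • B1mat v w + c2 • B2mat v w + c3 • B3mat v w + c4 • B4mat v w

/-- `f₁ = −tr M`. -/
noncomputable def f1 (c0 c1 c2 c3 c4 v w : ℝ) : ℝ := -(Mmat c0 c1 c2 c3 c4 v w).trace

/-- `f₂ = det M`. -/
noncomputable def f2 (c0 c1 c2 c3 c4 v w : ℝ) : ℝ := (Mmat c0 c1 c2 c3 c4 v w).det

/-!
Off the diagonal `v = w` the denominators `w - v` cancel in the trace and determinant of `M`:
both are affine functions of the symmetric functions `v + w` and `v w`.
Their partial derivatives are therefore affine in the other variable, and the criterion reduces to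
a rational identity in `v, w`. Since `{v ≠ w}` is open, the derivatives at a point off the
diagonal only see these closed forms, not the junk values of `(w - v)⁻¹` on the diagonal.
-/

lemma deriv_left_of_eq_symmAffine {F : ℝ → ℝ → ℝ} {a b c v w : ℝ}
    (hF : ∀ x y, x ≠ y → F x y = a * (x + y) + b * (x * y) + c) (hvw : v ≠ w) :
    deriv (fun x => F x w) v = a + b * w := by
  have hG : HasDerivAt (fun x => a * (x + w) + b * (x * w) + c) (a + b * w) v := by
    simpa using ((((hasDerivAt_id v).add_const w).const_mul a).add
      (((hasDerivAt_id v).mul_const w).const_mul b)).add_const c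
  refine (hG.congr_of_eventuallyEq ?_).deriv
  filter_upwards [isOpen_ne.mem_nhds hvw] with x hx using hF x w hx

lemma deriv_right_of_eq_symmAffine {F : ℝ → ℝ → ℝ} {a b c v w : ℝ}
    (hF : ∀ x y, x ≠ y → F x y = a * (x + y) + b * (x * y) + c) (hvw : v ≠ w) :
    deriv (fun y => F v y) w = a + b * v :=
  deriv_left_of_eq_symmAffine (F := Function.swap F) (a := a) (b := b) (c := c)
    (fun x y hxy => by rw [Function.swap, hF y x hxy.symm]; ring) hvw.symm

lemma Mmat_eq (c0 c1 c2 c3 c4 v w : ℝ) :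
    Mmat c0 c1 c2 c3 c4 v w =
      !![c0 * w + (c1 + c2 * w + c3 * w ^ 2 + c4 * v * w ^ 2) / (w - v),
          (c1 + c2 * v + c3 * v ^ 2 + c4 * v ^ 3) / (w - v);
        -(c1 + c2 * w + c3 * w ^ 2 + c4 * w ^ 3) / (w - v),
          c0 * v - (c1 + c2 * v + c3 * v ^ 2 + c4 * w * v ^ 2) / (w - v)] := by
  ext i j
  fin_cases i <;> fin_cases j <;>
    simp only [Mmat, Amat, B1mat, B2mat, B3mat, B4mat, smul_of, smul_cons, smul_empty, of_add_of,
      add_cons, empty_add_empty, head_cons, tail_cons, Fin.zero_eta, Fin.mk_one, Matrix.add_apply,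
      of_apply, cons_val', cons_val_zero, cons_val_one, cons_val_fin_one, smul_eq_mul] <;> ring

lemma trace_Mmat (c0 c1 c2 c3 c4 : ℝ) {v w : ℝ} (hvw : v ≠ w) :
    (Mmat c0 c1 c2 c3 c4 v w).trace = (c0 + c3) * (v + w) + c4 * (v * w) + c2 := by
  have : w - v ≠ 0 := sub_ne_zero.mpr hvw.symm
  rw [Mmat_eq, trace_fin_two_of]
  field_simp
  ring

lemma det_Mmat (c0 c1 c2 c3 c4 : ℝ) {v w : ℝ} (hvw : v ≠ w) :
    (Mmat c0 c1 c2 c3 c4 v w).det =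
      c1 * c4 * (v + w) + (c0 ^ 2 + c0 * c3 + c2 * c4) * (v * w) - c0 * c1 := by
  have : w - v ≠ 0 := sub_ne_zero.mpr hvw.symm
  rw [Mmat_eq, det_fin_two_of]
  field_simp
  ring

/-- For all constants `c₀,…,c₄` and every point `(v,w)` with `v ≠ w`, the matrix
`M(v,w)` satisfies the 2×2 linear degeneracy criterion
`Σ_j (∂f₁/∂u^j) M_{jk} + ∂f₂/∂u^k = 0` for `k = 1, 2`, where `(u¹,u²) = (v,w)`. -/
theorem stmt1 (c0 c1 c2 c3 c4 : ℝ) (v w : ℝ) (hvw : v ≠ w) :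
    (deriv (fun v' => f1 c0 c1 c2 c3 c4 v' w) v * Mmat c0 c1 c2 c3 c4 v w 0 0 +
      deriv (fun w' => f1 c0 c1 c2 c3 c4 v w') w * Mmat c0 c1 c2 c3 c4 v w 1 0 +
      deriv (fun v' => f2 c0 c1 c2 c3 c4 v' w) v = 0) ∧
    (deriv (fun v' => f1 c0 c1 c2 c3 c4 v' w) v * Mmat c0 c1 c2 c3 c4 v w 0 1 +
      deriv (fun w' => f1 c0 c1 c2 c3 c4 v w') w * Mmat c0 c1 c2 c3 c4 v w 1 1 +
      deriv (fun w' => f2 c0 c1 c2 c3 c4 v w') w = 0) := by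
  have hf1 : ∀ x y, x ≠ y →
      f1 c0 c1 c2 c3 c4 x y = -(c0 + c3) * (x + y) + -c4 * (x * y) + -c2 := fun x y hxy => by
    rw [f1, trace_Mmat _ _ _ _ _ hxy]; ring
  have hf2 : ∀ x y, x ≠ y → f2 c0 c1 c2 c3 c4 x y =
      c1 * c4 * (x + y) + (c0 ^ 2 + c0 * c3 + c2 * c4) * (x * y) + -(c0 * c1) := fun x y hxy => by
    rw [f2, det_Mmat _ _ _ _ _ hxy]; ring
  rw [deriv_left_of_eq_symmAffine hf1 hvw, deriv_right_of_eq_symmAffine hf1 hvw,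
    deriv_left_of_eq_symmAffine hf2 hvw, deriv_right_of_eq_symmAffine hf2 hvw, Mmat_eq]
  have : w - v ≠ 0 := sub_ne_zero.mpr hvw.symm
  simp only [of_apply, cons_val', cons_val_zero, cons_val_one, empty_val', cons_val_fin_one]
  constructor <;> field_simp <;> ring
end

section
/- Let v, w : ℝ⁶ → ℝ be continuously differentiable functions of (t,x,y,z,s,r) with v ≠ w everywhere, satisfying the (5+1)-dimensional diagonal system: v_t + w v_x + (v_y + w_y)/(w−v) + (w v_z + v w_z)/(w−v) + (w² v_s + v² w_s)/(w−v) + (v w² v_r + v³ w_r)/(w−v) = 0 and w_t + v w_x + (v_y + w_y)/(v−w) + (w v_z + v w_z)/(v−w) + (w² v_s + v² w_s)/(v−w) + (w³ v_r + w v² w_r)/(v−w) = 0. Then the functions V = v + w and W = v w satisfy V_t + W_x + W V_r − V W_r = 0 and W_t + V W_x − W V_x + V_y + W_z + V W_s − W V_s = 0. -/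
lemma pd_fun_add {n : ℕ} (i : Fin n) {f g : (Fin n → ℝ) → ℝ} {x : Fin n → ℝ}
    (hf : DifferentiableAt ℝ f x) (hg : DifferentiableAt ℝ g x) :
    pd i (fun y => f y + g y) x = pd i f x + pd i g x := by
  rw [pd, fderiv_fun_add hf hg]
  rfl

lemma pd_fun_mul {n : ℕ} (i : Fin n) {f g : (Fin n → ℝ) → ℝ} {x : Fin n → ℝ}
    (hf : DifferentiableAt ℝ f x) (hg : DifferentiableAt ℝ g x) :
    pd i (fun y => f y * g y) x = f x * pd i g x + g x * pd i f x := by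
  rw [pd, fderiv_fun_mul hf hg]
  simp [pd]

/-- Coordinates on ℝ⁶ are `(t,x,y,z,s,r)` with indices `(0,1,2,3,4,5)`. -/
theorem stmt2 (v w : (Fin 6 → ℝ) → ℝ) (hv : ContDiff ℝ 1 v) (hw : ContDiff ℝ 1 w)
    (hne : ∀ x, v x ≠ w x)
    (h1 : ∀ x, pd 0 v x + w x * pd 1 v x
        + (pd 2 v x + pd 2 w x) / (w x - v x)
        + (w x * pd 3 v x + v x * pd 3 w x) / (w x - v x)
        + ((w x) ^ 2 * pd 4 v x + (v x) ^ 2 * pd 4 w x) / (w x - v x)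
        + (v x * (w x) ^ 2 * pd 5 v x + (v x) ^ 3 * pd 5 w x) / (w x - v x) = 0)
    (h2 : ∀ x, pd 0 w x + v x * pd 1 w x
        + (pd 2 v x + pd 2 w x) / (v x - w x)
        + (w x * pd 3 v x + v x * pd 3 w x) / (v x - w x)
        + ((w x) ^ 2 * pd 4 v x + (v x) ^ 2 * pd 4 w x) / (v x - w x)
        + ((w x) ^ 3 * pd 5 v x + w x * (v x) ^ 2 * pd 5 w x) / (v x - w x) = 0) :
    (∀ x, pd 0 (fun y => v y + w y) x + pd 1 (fun y => v y * w y) x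
        + (v x * w x) * pd 5 (fun y => v y + w y) x
        - (v x + w x) * pd 5 (fun y => v y * w y) x = 0) ∧
    (∀ x, pd 0 (fun y => v y * w y) x + (v x + w x) * pd 1 (fun y => v y * w y) x
        - (v x * w x) * pd 1 (fun y => v y + w y) x
        + pd 2 (fun y => v y + w y) x + pd 3 (fun y => v y * w y) x
        + (v x + w x) * pd 4 (fun y => v y * w y) x
        - (v x * w x) * pd 4 (fun y => v y + w y) x = 0) := by
  have hvd := hv.differentiable one_ne_zero
  have hwd := hw.differentiable one_ne_zero
  refine ⟨fun x => ?_, fun x => ?_⟩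
  all_goals
    have hwv : w x - v x ≠ 0 := sub_ne_zero.mpr (hne x).symm
    have hvw : v x - w x ≠ 0 := sub_ne_zero.mpr (hne x)
    have e1 := h1 x
    have e2 := h2 x
    field_simp at e1 e2
    simp only [pd_fun_add _ (hvd x) (hwd x), pd_fun_mul _ (hvd x) (hwd x)]
    refine (mul_eq_zero.mp ?_).resolve_left hwv
  · linear_combination e1 - e2
  · linear_combination w x * e1 - v x * e2
end

section
/- Let m, n : ℝ³ → ℝ be continuously differentiable functions of (T,X,Y) solving the Pavlov equation system m_T = n_X and n_T = m_Y + m n_X − n m_X. Define v, w : ℝ⁶ → ℝ by v(t,x,y,z,s,r) = m(t+z, x+s, y) and w(t,x,y,z,s,r) = n(t+z, x+s, y). Then (v,w) solves the system (ma): v_t = w_x + w v_r − v w_r and w_z = v_y + v w_s − w v_s. -/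
/-! The lift `m ↦ v` is composition with a linear map, so by the chain rule every partial
derivative of `v` is a directional derivative of `m` along the image of a basis vector: the
directions `t, z` go to `T`, the directions `x, s` go to `X`, `y` goes to `Y` and `r` to `0`.
Hence `v_t = m_T = n_X = w_x` while `v_r = w_r = 0`, and `w_z = n_T`, `w_s = n_X`, `v_s = m_X`,
`v_y = m_Y`, so (ma) is the Pavlov system read at `(t+z, x+s, y)`. -/

section CompLinear

variable {k n : ℕ} {f : (Fin n → ℝ) → ℝ} {L : (Fin k → ℝ) →L[ℝ] (Fin n → ℝ)} {x : Fin k → ℝ}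

theorem pd_comp_clm (hf : DifferentiableAt ℝ f (L x)) (i : Fin k) :
    pd i (f ∘ L) x = fderiv ℝ f (L x) (L (Pi.single i 1)) := by
  rw [pd, fderiv_comp x hf L.differentiableAt, L.fderiv, ContinuousLinearMap.comp_apply]

theorem pd_comp_clm_of_apply_single {i : Fin k} {j : Fin n}
    (hf : DifferentiableAt ℝ f (L x)) (hL : L (Pi.single i 1) = Pi.single j 1) :
    pd i (f ∘ L) x = pd j f (L x) := by
  rw [pd_comp_clm hf, hL, pd]

theorem pd_comp_clm_of_apply_single_eq_zero {i : Fin k}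
    (hf : DifferentiableAt ℝ f (L x)) (hL : L (Pi.single i 1) = 0) :
    pd i (f ∘ L) x = 0 := by
  rw [pd_comp_clm hf, hL, map_zero]

end CompLinear

noncomputable def pavlovCoords : (Fin 6 → ℝ) →L[ℝ] (Fin 3 → ℝ) :=
  ContinuousLinearMap.pi
    ![(ContinuousLinearMap.proj 0 : (Fin 6 → ℝ) →L[ℝ] ℝ) + ContinuousLinearMap.proj 3,
      (ContinuousLinearMap.proj 1 : (Fin 6 → ℝ) →L[ℝ] ℝ) + ContinuousLinearMap.proj 4,
      ContinuousLinearMap.proj 2]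

@[simp]
theorem pavlovCoords_apply (x : Fin 6 → ℝ) : pavlovCoords x = ![x 0 + x 3, x 1 + x 4, x 2] := by
  ext i
  fin_cases i <;> simp [pavlovCoords]

theorem pavlovCoords_single :
    pavlovCoords (Pi.single 0 1) = Pi.single 0 1 ∧ pavlovCoords (Pi.single 1 1) = Pi.single 1 1 ∧
      pavlovCoords (Pi.single 2 1) = Pi.single 2 1 ∧
      pavlovCoords (Pi.single 3 1) = Pi.single 0 1 ∧
      pavlovCoords (Pi.single 4 1) = Pi.single 1 1 ∧ pavlovCoords (Pi.single 5 1) = 0 := by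
  refine ⟨?_, ?_, ?_, ?_, ?_, ?_⟩ <;> ext i <;> fin_cases i <;> simp

/-- Coordinates of `m, n` are `(T,X,Y)` = indices `(0,1,2)`; coordinates on ℝ⁶ are
`(t,x,y,z,s,r)` = indices `(0,1,2,3,4,5)`.  If C¹ functions `m, n` solve the Pavlov system
`m_T = n_X`, `n_T = m_Y + m n_X − n m_X`, then `v(t,x,y,z,s,r) = m(t+z, x+s, y)` and
`w(t,x,y,z,s,r) = n(t+z, x+s, y)` solve the system (ma):
`v_t = w_x + w v_r − v w_r`, `w_z = v_y + v w_s − w v_s`. -/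
theorem stmt4 (m n : (Fin 3 → ℝ) → ℝ) (hm : ContDiff ℝ 1 m) (hn : ContDiff ℝ 1 n)
    (hP1 : ∀ X : Fin 3 → ℝ, pd 0 m X = pd 1 n X)
    (hP2 : ∀ X : Fin 3 → ℝ, pd 0 n X = pd 2 m X + m X * pd 1 n X - n X * pd 1 m X)
    (v w : (Fin 6 → ℝ) → ℝ)
    (hvdef : ∀ x : Fin 6 → ℝ, v x = m ![x 0 + x 3, x 1 + x 4, x 2])
    (hwdef : ∀ x : Fin 6 → ℝ, w x = n ![x 0 + x 3, x 1 + x 4, x 2]) :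
    (∀ x : Fin 6 → ℝ, pd 0 v x = pd 1 w x + w x * pd 5 v x - v x * pd 5 w x) ∧
    (∀ x : Fin 6 → ℝ, pd 3 w x = pd 2 v x + v x * pd 4 w x - w x * pd 4 v x) := by
  obtain rfl : v = m ∘ pavlovCoords := funext fun x => by simp [hvdef]
  obtain rfl : w = n ∘ pavlovCoords := funext fun x => by simp [hwdef]
  obtain ⟨e0, e1, e2, e3, e4, e5⟩ := pavlovCoords_single
  have hm' : Differentiable ℝ m := hm.differentiable one_ne_zero
  have hn' : Differentiable ℝ n := hn.differentiable one_ne_zero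
  refine ⟨fun x => ?_, fun x => ?_⟩
  · rw [pd_comp_clm_of_apply_single (hm' _) e0, pd_comp_clm_of_apply_single (hn' _) e1,
      pd_comp_clm_of_apply_single_eq_zero (hm' _) e5,
      pd_comp_clm_of_apply_single_eq_zero (hn' _) e5, hP1]
    ring
  · rw [pd_comp_clm_of_apply_single (hn' _) e3, pd_comp_clm_of_apply_single (hm' _) e2,
      pd_comp_clm_of_apply_single (hn' _) e4, pd_comp_clm_of_apply_single (hm' _) e4, hP2]
    rfl
end

section
/- Let v, w : ℝ³ → ℝ be continuously differentiable functions of (t,x,y) solving the system (max): v_t + w_x = 0 and w_t + w_y + v w_x − w v_x = 0, and suppose w is nowhere zero. Then the following three conservation laws hold at every point: (i) ∂_t v + ∂_x w = 0; (ii) ∂_t(v² − w) + ∂_x(v w) − ∂_y w = 0; (iii) ∂_t(1/w) + ∂_x(v/w) + ∂_y(1/w) = 0. -/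
section PartialDerivative

variable {n : ℕ} (i : Fin n) {f g : (Fin n → ℝ) → ℝ} {x : Fin n → ℝ}

lemma pd_const (c : ℝ) : pd i (fun _ => c) x = 0 := by
  simp [pd]

lemma pd_sub (hf : DifferentiableAt ℝ f x) (hg : DifferentiableAt ℝ g x) :
    pd i (fun y => f y - g y) x = pd i f x - pd i g x := by
  simp [pd, fderiv_fun_sub hf hg]

lemma pd_mul (hf : DifferentiableAt ℝ f x) (hg : DifferentiableAt ℝ g x) :
    pd i (fun y => f y * g y) x = pd i f x * g x + f x * pd i g x := by
  simp only [pd, fderiv_fun_mul hf hg, add_apply, smul_apply, smul_eq_mul]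
  ring

lemma pd_pow (m : ℕ) (hf : DifferentiableAt ℝ f x) :
    pd i (fun y => f y ^ m) x = m * f x ^ (m - 1) * pd i f x := by
  simp [pd, fderiv_fun_pow m hf, nsmul_eq_mul]

lemma pd_inv (hf : DifferentiableAt ℝ f x) (hx : f x ≠ 0) :
    pd i (fun y => (f y)⁻¹) x = -pd i f x / f x ^ 2 := by
  have h : HasFDerivAt (fun y => (f y)⁻¹) _ x := (hasFDerivAt_inv hx).comp x hf.hasFDerivAt
  rw [pd, h.fderiv]
  simp only [ContinuousLinearMap.comp_apply, ContinuousLinearMap.toSpanSingleton_apply,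
    smul_eq_mul, pd]
  ring

lemma pd_div (hf : DifferentiableAt ℝ f x) (hg : DifferentiableAt ℝ g x) (hx : g x ≠ 0) :
    pd i (fun y => f y / g y) x = (pd i f x * g x - f x * pd i g x) / g x ^ 2 := by
  simp only [div_eq_mul_inv]
  rw [pd_mul i hf (hg.fun_inv hx), pd_inv i hg hx]
  field_simp
  ring

end PartialDerivative

section MaxSystem

variable {v w : (Fin 3 → ℝ) → ℝ} {x : Fin 3 → ℝ}

theorem conservation_law_sq_sub (hv : DifferentiableAt ℝ v x) (hw : DifferentiableAt ℝ w x)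
    (h1 : pd 0 v x + pd 1 w x = 0)
    (h2 : pd 0 w x + pd 2 w x + v x * pd 1 w x - w x * pd 1 v x = 0) :
    pd 0 (fun y => v y ^ 2 - w y) x + pd 1 (fun y => v y * w y) x - pd 2 w x = 0 := by
  rw [pd_sub 0 (hv.fun_pow 2) hw, pd_pow 0 2 hv, pd_mul 1 hv hw]
  linear_combination 2 * v x * h1 - h2

theorem conservation_law_inv (hv : DifferentiableAt ℝ v x) (hw : DifferentiableAt ℝ w x)
    (hx : w x ≠ 0) (h2 : pd 0 w x + pd 2 w x + v x * pd 1 w x - w x * pd 1 v x = 0) :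
    pd 0 (fun y => 1 / w y) x + pd 1 (fun y => v y / w y) x + pd 2 (fun y => 1 / w y) x = 0 := by
  have hc : DifferentiableAt ℝ (fun _ => (1 : ℝ)) x := differentiableAt_const 1
  rw [pd_div 0 hc hw hx, pd_div 1 hv hw hx, pd_div 2 hc hw hx, pd_const, pd_const]
  field_simp
  linear_combination -h2

end MaxSystem

/-- Coordinates on ℝ³ are `(t,x,y)` with indices `(0,1,2)`.
If C¹ functions `v, w` solve the system (max) and `w` is nowhere zero, then the three
conservation laws hold: `∂_t v + ∂_x w = 0`, `∂_t(v² − w) + ∂_x(vw) − ∂_y w = 0`,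
`∂_t(1/w) + ∂_x(v/w) + ∂_y(1/w) = 0`. -/
theorem stmt5 (v w : (Fin 3 → ℝ) → ℝ) (hv : ContDiff ℝ 1 v) (hw : ContDiff ℝ 1 w)
    (hw0 : ∀ x, w x ≠ 0)
    (h1 : ∀ x, pd 0 v x + pd 1 w x = 0)
    (h2 : ∀ x, pd 0 w x + pd 2 w x + v x * pd 1 w x - w x * pd 1 v x = 0) :
    (∀ x, pd 0 v x + pd 1 w x = 0) ∧
    (∀ x, pd 0 (fun y => (v y) ^ 2 - w y) x + pd 1 (fun y => v y * w y) x - pd 2 w x = 0) ∧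
    (∀ x, pd 0 (fun y => 1 / w y) x + pd 1 (fun y => v y / w y) x
        + pd 2 (fun y => 1 / w y) x = 0) := by
  have hv' := hv.differentiable one_ne_zero
  have hw' := hw.differentiable one_ne_zero
  exact ⟨h1, fun x => conservation_law_sq_sub (hv' x) (hw' x) (h1 x) (h2 x),
    fun x => conservation_law_inv (hv' x) (hw' x) (hw0 x) (h2 x)⟩
end

section
/- Let v, w : ℝ³ → ℝ be continuously differentiable functions of (t,x,y) with w nowhere zero. Then (v,w) solves the system (max) (v_t + w_x = 0, w_t + w_y + v w_x − w v_x = 0) if and only if (v,w) solves the Friedrichs-symmetrized system: −w v_t − w w_x = 0 and w_t − w v_x + v w_x + w_y = 0, i.e. S₀ (v,w)_tᵀ + S₁ (v,w)_xᵀ + S₂ (v,w)_yᵀ = 0 with S₀ = [[−w,0],[0,1]], S₁ = [[0,−w],[−w,v]], S₂ = [[0,0],[0,1]]. Moreover, the matrices S₀, S₁, S₂ are symmetric, and S₀ is positive definite if and only if w < 0. -/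
open Matrix

/-- `S₀ = [[−w,0],[0,1]]`. -/
noncomputable def S0 (w : ℝ) : Matrix (Fin 2) (Fin 2) ℝ := !![-w, 0; 0, 1]

/-- `S₁ = [[0,−w],[−w,v]]`. -/
noncomputable def S1 (v w : ℝ) : Matrix (Fin 2) (Fin 2) ℝ := !![0, -w; -w, v]

/-- `S₂ = [[0,0],[0,1]]`. -/
noncomputable def S2 : Matrix (Fin 2) (Fin 2) ℝ := !![0, 0; 0, 1]

theorem Matrix.isSymm_of_fin_two {α : Type*} (a b d : α) : (!![a, b; b, d]).IsSymm :=
  IsSymm.ext fun i j => by fin_cases i <;> fin_cases j <;> rfl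

theorem Matrix.posDef_fin_two_diagonal_iff {R : Type*} [CommRing R] [PartialOrder R]
    [StarRing R] [StarOrderedRing R] [NoZeroDivisors R] [Nontrivial R] (a b : R) :
    (!![a, 0; 0, b]).PosDef ↔ 0 < a ∧ 0 < b := by
  rw [← diagonal_vec2, posDef_diagonal_iff, Fin.forall_fin_two]
  rfl

/-- The symmetrized system is the system (max) with its first equation multiplied by `-w`. -/
theorem max_system_iff_symmetrized {v w vt vx wt wx wy : ℝ} (hw : w ≠ 0) :
    (vt + wx = 0 ∧ wt + wy + v * wx - w * vx = 0) ↔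
      (-w * vt - w * wx = 0 ∧ wt - w * vx + v * wx + wy = 0) := by
  have first_eq : -w * vt - w * wx = -w * (vt + wx) := by ring
  rw [first_eq, mul_eq_zero, or_iff_right (neg_ne_zero.mpr hw)]
  constructor <;> rintro ⟨h₁, h₂⟩ <;> exact ⟨h₁, by linarith⟩

theorem S0_posDef_iff (w : ℝ) : (S0 w).PosDef ↔ w < 0 := by
  rw [S0, posDef_fin_two_diagonal_iff]
  simp

-- Coordinates on ℝ³ are `(t,x,y)` with indices `(0,1,2)`.
theorem stmt6_general (v w : (Fin 3 → ℝ) → ℝ)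
    (hw0 : ∀ x, w x ≠ 0) :
    ((∀ x, pd 0 v x + pd 1 w x = 0 ∧
        pd 0 w x + pd 2 w x + v x * pd 1 w x - w x * pd 1 v x = 0) ↔
      (∀ x, -(w x) * pd 0 v x - w x * pd 1 w x = 0 ∧
        pd 0 w x - w x * pd 1 v x + v x * pd 1 w x + pd 2 w x = 0)) ∧
    (∀ x, (S0 (w x)).IsSymm ∧ (S1 (v x) (w x)).IsSymm ∧ S2.IsSymm) ∧
    (∀ x, (S0 (w x)).PosDef ↔ w x < 0) :=
  ⟨forall_congr' fun x => max_system_iff_symmetrized (hw0 x),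
    fun _ => ⟨isSymm_of_fin_two _ _ _, isSymm_of_fin_two _ _ _, isSymm_of_fin_two _ _ _⟩,
    fun x => S0_posDef_iff (w x)⟩

/-- Coordinates on ℝ³ are `(t,x,y)` with indices `(0,1,2)`.
For C¹ functions `v, w` with `w` nowhere zero, `(v,w)` solves the system (max) iff it
solves the Friedrichs-symmetrized system `−w v_t − w w_x = 0`,
`w_t − w v_x + v w_x + w_y = 0`.  Moreover `S₀, S₁, S₂` are symmetric, and `S₀` is
positive definite iff `w < 0`. -/
theorem stmt6 (v w : (Fin 3 → ℝ) → ℝ) (hv : ContDiff ℝ 1 v) (hw : ContDiff ℝ 1 w)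
    (hw0 : ∀ x, w x ≠ 0) :
    ((∀ x, pd 0 v x + pd 1 w x = 0 ∧
        pd 0 w x + pd 2 w x + v x * pd 1 w x - w x * pd 1 v x = 0) ↔
      (∀ x, -(w x) * pd 0 v x - w x * pd 1 w x = 0 ∧
        pd 0 w x - w x * pd 1 v x + v x * pd 1 w x + pd 2 w x = 0)) ∧
    (∀ x, (S0 (w x)).IsSymm ∧ (S1 (v x) (w x)).IsSymm ∧ S2.IsSymm) ∧
    (∀ x, (S0 (w x)).PosDef ↔ w x < 0) :=
  stmt6_general v w hw0
end

section
/- Define f(p,q) = −p²/(4q) − 2√q, g(p,q) = p/√q, h(p,q) = −2√q for q > 0. Let v, w : ℝ³ → ℝ be continuously differentiable functions of (t,x,y) with w > 0 everywhere, and set P = −2v/w², Q = 1/w². Then the following pointwise identities hold: f_p(P,Q) = v, g_p(P,Q) = w, h_p(P,Q) = 0, f_q(P,Q) = v² − w, g_q(P,Q) = v w, h_q(P,Q) = −w. Consequently, if (v,w) solves the system (max) (v_t + w_x = 0, w_t + w_y + v w_x − w v_x = 0), then the Godunov-form equations ∂_t(f_p(P,Q)) + ∂_x(g_p(P,Q))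 + ∂_y(h_p(P,Q)) = 0 and ∂_t(f_q(P,Q)) + ∂_x(g_q(P,Q)) + ∂_y(h_q(P,Q)) = 0 hold. -/
/-- `f(p,q) = −p²/(4q) − 2√q`. -/
noncomputable def fG (p q : ℝ) : ℝ := -p ^ 2 / (4 * q) - 2 * Real.sqrt q

/-- `g(p,q) = p/√q`. -/
noncomputable def gG (p q : ℝ) : ℝ := p / Real.sqrt q

/-- `h(p,q) = −2√q`. -/
noncomputable def hG (p q : ℝ) : ℝ := -2 * Real.sqrt q

/-!
Since `√Q = 1 / w`, the partial derivatives of `f, g, h` at `(P, Q)` collapse to the polynomials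
`(v, w, 0)` in `p` and `(v² - w, v w, -w)` in `q`. The first Godunov equation is then the first
equation of (max), and by the product rule the second divergence equals
`2 v (v_t + w_x) - (w_t + w_y + v w_x - w v_x)`.
-/

open Real

section Potentials

variable (p : ℝ) {q : ℝ}

theorem deriv_fG_fst : deriv (fun p => fG p q) p = -p / (2 * q) := by
  have h : HasDerivAt (fun p => fG p q) (-(2 * p ^ 1) / (4 * q)) p :=
    ((hasDerivAt_pow 2 p).neg.div_const (4 * q)).sub_const (2 * √q)
  rw [h.deriv]
  ring

theorem deriv_gG_fst : deriv (fun p => gG p q) p = (√q)⁻¹ := by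
  simp [gG]

theorem deriv_hG_fst : deriv (fun p => hG p q) p = 0 := by
  simp [hG]

variable (hq : 0 < q)
include hq

theorem deriv_fG_snd : deriv (fun q => fG p q) q = p ^ 2 / (4 * q ^ 2) - (√q)⁻¹ := by
  have h := (((hasDerivAt_inv hq.ne').const_mul (-p ^ 2 / 4)).fun_sub
    ((hasDerivAt_sqrt hq.ne').const_mul 2))
  rw [show (fun q => fG p q) = fun q => -p ^ 2 / 4 * q⁻¹ - 2 * √q by ext; simp only [fG]; ring,
    h.deriv]
  field_simp

theorem deriv_gG_snd : deriv (fun q => gG p q) q = -p / (2 * q * √q) := by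
  have h : HasDerivAt (fun q => gG p q) (p * (-(1 / (2 * √q)) / √q ^ 2)) q :=
    ((hasDerivAt_sqrt hq.ne').inv (sqrt_pos.2 hq).ne').const_mul p
  rw [h.deriv, sq_sqrt hq.le]
  field_simp

theorem deriv_hG_snd : deriv (fun q => hG p q) q = -(√q)⁻¹ := by
  have h : HasDerivAt (fun q => hG p q) (-2 * (1 / (2 * √q))) q :=
    (hasDerivAt_sqrt hq.ne').const_mul (-2)
  rw [h.deriv]
  field_simp

end Potentials

theorem deriv_potentials_at {a b p q : ℝ} (hb : 0 < b) (hp : p = -2 * a / b ^ 2)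
    (hq : q = 1 / b ^ 2) :
    deriv (fun p => fG p q) p = a ∧ deriv (fun p => gG p q) p = b ∧
    deriv (fun p => hG p q) p = 0 ∧ deriv (fun q => fG p q) q = a ^ 2 - b ∧
    deriv (fun q => gG p q) q = a * b ∧ deriv (fun q => hG p q) q = -b := by
  subst hp hq
  have hq : 0 < 1 / b ^ 2 := by positivity
  have hsqrt : √(1 / b ^ 2) = 1 / b := by
    rw [← one_div_pow, sqrt_sq (by positivity)]
  rw [deriv_fG_fst, deriv_gG_fst, deriv_hG_fst, deriv_fG_snd _ hq, deriv_gG_snd _ hq,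
    deriv_hG_snd _ hq, hsqrt]
  refine ⟨?_, ?_, rfl, ?_, ?_, ?_⟩ <;> field_simp
  ring

theorem godunov_q_divergence_eq {n : ℕ} (i j k : Fin n) {v w : (Fin n → ℝ) → ℝ} {x : Fin n → ℝ}
    (hv : DifferentiableAt ℝ v x) (hw : DifferentiableAt ℝ w x) :
    pd i (fun y => v y ^ 2 - w y) x + pd j (fun y => v y * w y) x + pd k (fun y => -w y) x =
      2 * v x * (pd i v x + pd j w x) -
        (pd i w x + pd k w x + v x * pd j w x - w x * pd j v x) := by
  simp only [pd, fderiv_fun_sub (hv.fun_pow 2) hw, fderiv_fun_pow 2 hv, fderiv_fun_mul hv hw,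
    fderiv_fun_neg, sub_apply, add_apply, neg_apply, smul_apply, smul_eq_mul, nsmul_eq_mul]
  ring

-- Coordinates on ℝ³ are `(t, x, y)` with indices `(0, 1, 2)`.
/-- Coordinates on ℝ³ are `(t,x,y)` with indices `(0,1,2)`.
For C¹ functions `v, w` with `w > 0` and `P = −2v/w²`, `Q = 1/w²`, the identities
`f_p(P,Q) = v`, `g_p(P,Q) = w`, `h_p(P,Q) = 0`, `f_q(P,Q) = v² − w`, `g_q(P,Q) = vw`,
`h_q(P,Q) = −w` hold; consequently solutions of (max) satisfy the Godunov-form equations. -/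
theorem stmt7 (v w P Q : (Fin 3 → ℝ) → ℝ) (hv : ContDiff ℝ 1 v) (hw : ContDiff ℝ 1 w)
    (hwpos : ∀ x, 0 < w x)
    (hP : ∀ x, P x = -2 * v x / (w x) ^ 2) (hQ : ∀ x, Q x = 1 / (w x) ^ 2) :
    (∀ x, deriv (fun p => fG p (Q x)) (P x) = v x ∧
        deriv (fun p => gG p (Q x)) (P x) = w x ∧
        deriv (fun p => hG p (Q x)) (P x) = 0 ∧
        deriv (fun q => fG (P x) q) (Q x) = (v x) ^ 2 - w x ∧
        deriv (fun q => gG (P x) q) (Q x) = v x * w x ∧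
        deriv (fun q => hG (P x) q) (Q x) = -w x) ∧
    ((∀ x, pd 0 v x + pd 1 w x = 0 ∧
        pd 0 w x + pd 2 w x + v x * pd 1 w x - w x * pd 1 v x = 0) →
      (∀ x, pd 0 (fun y => deriv (fun p => fG p (Q y)) (P y)) x
          + pd 1 (fun y => deriv (fun p => gG p (Q y)) (P y)) x
          + pd 2 (fun y => deriv (fun p => hG p (Q y)) (P y)) x = 0 ∧
        pd 0 (fun y => deriv (fun q => fG (P y) q) (Q y)) x
          + pd 1 (fun y => deriv (fun q => gG (P y) q) (Q y)) x
          + pd 2 (fun y => deriv (fun q => hG (P y) q) (Q y)) x = 0)) := by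
  have hderivs := fun x => deriv_potentials_at (hwpos x) (hP x) (hQ x)
  refine ⟨hderivs, fun hmax x => ?_⟩
  obtain ⟨hmass, hmomentum⟩ := hmax x
  simp only [hderivs]
  have hvx := (hv.differentiable one_ne_zero) x
  have hwx := (hw.differentiable one_ne_zero) x
  refine ⟨by simpa [pd] using hmass, ?_⟩
  rw [godunov_q_divergence_eq 0 1 2 hvx hwx, hmass, hmomentum]
  ring
end

section
/- Let v, φ : ℝ³ → ℝ be sufficiently smooth functions of (x,y,τ) satisfying v_τ = (φ²)_x, v_y = (1/4) v_{xxx} − 3 v v_x, φ_{xx} = 2 v φ, and φ_y = (1/2) v_x φ − v φ_x. Define w = −φ². Then (v,w) solves the system (max1): v_τ + w_x = 0 and w_y + v w_x − w v_x = 0. -/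
lemma pd_negsq {n : ℕ} (i : Fin n) (f : (Fin n → ℝ) → ℝ) (hf : ContDiff ℝ (⊤ : ℕ∞) f)
    (x : Fin n → ℝ) : pd i (fun y => -(f y) ^ 2) x = -(2 * f x * pd i f x) := by
  have hd : DifferentiableAt ℝ f x := hf.differentiable (by simp) x
  have h2 : DifferentiableAt ℝ (fun y => (f y) ^ 2) x := hd.pow 2
  unfold pd
  have : (fun y => -(f y) ^ 2) = fun y => -(f y * f y) := by funext y; ring
  rw [this, fderiv_fun_neg, fderiv_fun_mul hd hd]
  simp
  ring

lemma pd_sq {n : ℕ} (i : Fin n) (f : (Fin n → ℝ) → ℝ) (hf : ContDiff ℝ (⊤ : ℕ∞) f)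
    (x : Fin n → ℝ) : pd i (fun y => (f y) ^ 2) x = 2 * f x * pd i f x := by
  have hd : DifferentiableAt ℝ f x := hf.differentiable (by simp) x
  unfold pd
  have : (fun y => (f y) ^ 2) = fun y => f y * f y := by funext y; ring
  rw [this, fderiv_fun_mul hd hd]
  simp
  ring

/-- Coordinates on ℝ³ are `(x,y,τ)` with indices `(0,1,2)`.
If smooth functions `v, φ` satisfy `v_τ = (φ²)_x`, `v_y = (1/4)v_{xxx} − 3vv_x`,
`φ_{xx} = 2vφ`, `φ_y = (1/2)v_x φ − vφ_x`, then `(v, w)` with `w = −φ²` solves (max1):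
`v_τ + w_x = 0`, `w_y + v w_x − w v_x = 0`. -/
theorem stmt10 (v φ : (Fin 3 → ℝ) → ℝ) (hv : ContDiff ℝ (⊤ : ℕ∞) v) (hφ : ContDiff ℝ (⊤ : ℕ∞) φ)
    (h1 : ∀ x, pd 2 v x = pd 0 (fun y => (φ y) ^ 2) x)
    (h2 : ∀ x, pd 1 v x = (1 / 4) * pd 0 (pd 0 (pd 0 v)) x - 3 * v x * pd 0 v x)
    (h3 : ∀ x, pd 0 (pd 0 φ) x = 2 * v x * φ x)
    (h4 : ∀ x, pd 1 φ x = (1 / 2) * pd 0 v x * φ x - v x * pd 0 φ x)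
    (w : (Fin 3 → ℝ) → ℝ) (hwdef : ∀ x, w x = -(φ x) ^ 2) :
    (∀ x, pd 2 v x + pd 0 w x = 0) ∧
    (∀ x, pd 1 w x + v x * pd 0 w x - w x * pd 0 v x = 0) := by
  have hw : w = fun y => -(φ y) ^ 2 := funext hwdef
  subst hw
  constructor
  · intro x
    rw [h1, pd_negsq 0 φ hφ, pd_sq 0 φ hφ]
    ring
  · intro x
    rw [pd_negsq 0 φ hφ, pd_negsq 1 φ hφ, h4]
    ring
end

section
/- Let N ≥ 1 and let λ¹, …, λ^N : ℝ^N → ℝ be continuous and nowhere zero, and let v, w : ℝ^N → ℝ be continuously differentiable functions of R = (R¹, …, R^N) satisfying ∂w/∂R^i = −λ^i ∂v/∂R^i for each i. Define μ^i := −λ^i − v − w/λ^i. Let R : ℝ³ → ℝ^N be a continuously differentiable function of (t,x,y) satisfying R^i_t = λ^i(R) R^i_x and R^i_y = μ^i(R) R^i_x for each i. Then the functions V := v ∘ R and W := w ∘ R solve the system (max): V_t + W_x = 0 and W_t + W_y + V W_x − W V_x = 0. -/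
theorem pd_comp {m n : ℕ} {f : (Fin n → ℝ) → ℝ} {R : (Fin m → ℝ) → Fin n → ℝ}
    {p : Fin m → ℝ} (hf : DifferentiableAt ℝ f (R p)) (hR : DifferentiableAt ℝ R p)
    (k : Fin m) :
    pd k (fun q => f (R q)) p = ∑ i, pd i f (R p) * pd k (fun q => R q i) p := by
  have hcomp : fderiv ℝ (fun q => f (R q)) p = (fderiv ℝ f (R p)).comp (fderiv ℝ R p) :=
    fderiv_comp p hf hR
  simp only [pd, hcomp, fderiv_apply hR, ContinuousLinearMap.comp_apply,
    ContinuousLinearMap.proj_apply]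
  conv_lhs => rw [pi_eq_sum_univ' (fderiv ℝ R p (Pi.single k 1)), map_sum]
  simp only [map_smul, smul_eq_mul, mul_comm]

-- The coordinates `(t, x, y)` of ℝ³ are the indices `0, 1, 2`.
theorem stmt11_general (N : ℕ)
    (lam : Fin N → (Fin N → ℝ) → ℝ)
    (hlam0 : ∀ i R, lam i R ≠ 0)
    (v w : (Fin N → ℝ) → ℝ) (hv : ContDiff ℝ 1 v) (hw : ContDiff ℝ 1 w)
    (hvw : ∀ (i : Fin N) (R : Fin N → ℝ), pd i w R = -lam i R * pd i v R)
    (mu : Fin N → (Fin N → ℝ) → ℝ)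
    (hmu : ∀ (i : Fin N) (R : Fin N → ℝ), mu i R = -lam i R - v R - w R / lam i R)
    (R : (Fin 3 → ℝ) → (Fin N → ℝ)) (hR : ContDiff ℝ 1 R)
    (hRt : ∀ (i : Fin N) (p : Fin 3 → ℝ),
        pd 0 (fun q => R q i) p = lam i (R p) * pd 1 (fun q => R q i) p)
    (hRy : ∀ (i : Fin N) (p : Fin 3 → ℝ),
        pd 2 (fun q => R q i) p = mu i (R p) * pd 1 (fun q => R q i) p) :
    (∀ p, pd 0 (fun q => v (R q)) p + pd 1 (fun q => w (R q)) p = 0) ∧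
    (∀ p, pd 0 (fun q => w (R q)) p + pd 2 (fun q => w (R q)) p
        + v (R p) * pd 1 (fun q => w (R q)) p - w (R p) * pd 1 (fun q => v (R q)) p = 0) := by
  have hv' : ∀ p k, pd k (fun q => v (R q)) p = ∑ i, pd i v (R p) * pd k (fun q => R q i) p :=
    fun p => pd_comp (hv.differentiable one_ne_zero _) (hR.differentiable one_ne_zero p)
  have hw' : ∀ p k, pd k (fun q => w (R q)) p = ∑ i, pd i w (R p) * pd k (fun q => R q i) p :=
    fun p => pd_comp (hw.differentiable one_ne_zero _) (hR.differentiable one_ne_zero p)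
  refine ⟨fun p => ?_, fun p => ?_⟩
  · rw [hv', hw', ← Finset.sum_add_distrib]
    refine Finset.sum_eq_zero fun i _ => ?_
    rw [hvw, hRt]
    ring
  · simp only [hv', hw', Finset.mul_sum, ← Finset.sum_add_distrib, ← Finset.sum_sub_distrib]
    refine Finset.sum_eq_zero fun i _ => ?_
    rw [hvw, hRt, hRy, hmu]
    field_simp [hlam0 i (R p)]
    ring

/-- Coordinates on ℝ³ are `(t,x,y)` = indices `(0,1,2)`.
Hydrodynamic reductions: if `∂w/∂Rⁱ = −λⁱ ∂v/∂Rⁱ`, `μⁱ = −λⁱ − v − w/λⁱ`, and the phases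
satisfy `Rⁱ_t = λⁱ(R) Rⁱ_x`, `Rⁱ_y = μⁱ(R) Rⁱ_x`, then `V = v∘R`, `W = w∘R` solve (max). -/
theorem stmt11 (N : ℕ) (hN : 1 ≤ N)
    (lam : Fin N → (Fin N → ℝ) → ℝ)
    (hlamc : ∀ i, Continuous (lam i)) (hlam0 : ∀ i R, lam i R ≠ 0)
    (v w : (Fin N → ℝ) → ℝ) (hv : ContDiff ℝ 1 v) (hw : ContDiff ℝ 1 w)
    (hvw : ∀ (i : Fin N) (R : Fin N → ℝ), pd i w R = -lam i R * pd i v R)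
    (mu : Fin N → (Fin N → ℝ) → ℝ)
    (hmu : ∀ (i : Fin N) (R : Fin N → ℝ), mu i R = -lam i R - v R - w R / lam i R)
    (R : (Fin 3 → ℝ) → (Fin N → ℝ)) (hR : ContDiff ℝ 1 R)
    (hRt : ∀ (i : Fin N) (p : Fin 3 → ℝ),
        pd 0 (fun q => R q i) p = lam i (R p) * pd 1 (fun q => R q i) p)
    (hRy : ∀ (i : Fin N) (p : Fin 3 → ℝ),
        pd 2 (fun q => R q i) p = mu i (R p) * pd 1 (fun q => R q i) p) :
    (∀ p, pd 0 (fun q => v (R q)) p + pd 1 (fun q => w (R q)) p = 0) ∧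
    (∀ p, pd 0 (fun q => w (R q)) p + pd 2 (fun q => w (R q)) p
        + v (R p) * pd 1 (fun q => w (R q)) p - w (R p) * pd 1 (fun q => v (R q)) p = 0) :=
  stmt11_general N lam hlam0 v w hv hw hvw mu hmu R hR hRt hRy
end

section
/- Let N ≥ 1 and let R : ℝ³ → ℝ^N be a continuously differentiable function of (t,x,y) whose components satisfy the pair of linearly degenerate systems (ld): R^i_t = (Π_{k≠i} R^k) R^i_x and R^i_y = (Σ_{k≠i} R^k − Π_{k≠i} R^k) R^i_x for each i = 1, …, N. Then the functions v := −Σ_k R^k and w := Π_k R^k solve the system (max): v_t + w_x = 0 and w_t + w_y + v w_x − w v_x = 0. -/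
open Finset

section PartialDerivative

variable {n : ℕ} {ι : Type*} (j : Fin n) {x : Fin n → ℝ}

theorem pd_neg (f : (Fin n → ℝ) → ℝ) : pd j (fun q => -f q) x = -pd j f x := by
  simp only [pd, fderiv_fun_neg, neg_apply]

theorem pd_sum (s : Finset ι) {f : ι → (Fin n → ℝ) → ℝ}
    (hf : ∀ k ∈ s, DifferentiableAt ℝ (f k) x) :
    pd j (fun q => ∑ k ∈ s, f k q) x = ∑ k ∈ s, pd j (f k) x := by
  simp only [pd, fderiv_fun_sum hf, FunLike.coe_sum, Finset.sum_apply]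

theorem pd_prod [DecidableEq ι] (s : Finset ι) {f : ι → (Fin n → ℝ) → ℝ}
    (hf : ∀ k ∈ s, DifferentiableAt ℝ (f k) x) :
    pd j (fun q => ∏ k ∈ s, f k q) x = ∑ k ∈ s, (∏ l ∈ s.erase k, f l x) * pd j (f k) x := by
  simp only [pd, fderiv_finsetProd hf, FunLike.coe_sum, Finset.sum_apply,
    smul_apply, smul_eq_mul]

end PartialDerivative

theorem stmt13_general (N : ℕ)
    (R : (Fin 3 → ℝ) → (Fin N → ℝ)) (hR : ContDiff ℝ 1 R)
    (hRt : ∀ (i : Fin N) (p : Fin 3 → ℝ),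
        pd 0 (fun q => R q i) p =
          (∏ k ∈ Finset.univ.erase i, R p k) * pd 1 (fun q => R q i) p)
    (hRy : ∀ (i : Fin N) (p : Fin 3 → ℝ),
        pd 2 (fun q => R q i) p =
          ((∑ k ∈ Finset.univ.erase i, R p k) - ∏ k ∈ Finset.univ.erase i, R p k) *
            pd 1 (fun q => R q i) p) :
    (∀ p, pd 0 (fun q => -∑ k, R q k) p + pd 1 (fun q => ∏ k, R q k) p = 0) ∧
    (∀ p, pd 0 (fun q => ∏ k, R q k) p + pd 2 (fun q => ∏ k, R q k) p
        + (-∑ k, R p k) * pd 1 (fun q => ∏ k, R q k) p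
        - (∏ k, R p k) * pd 1 (fun q => -∑ k, R q k) p = 0) := by
  have hdiff (p : Fin 3 → ℝ) : ∀ i ∈ univ, DifferentiableAt ℝ (fun q => R q i) p :=
    fun i _ => differentiable_pi.mp (hR.differentiable one_ne_zero) i p
  refine ⟨fun p => ?_, fun p => ?_⟩
  · rw [pd_neg, pd_sum _ _ (hdiff p), pd_prod _ _ (hdiff p)]
    simp only [hRt, neg_add_cancel]
  · simp only [pd_neg, pd_sum _ _ (hdiff p), pd_prod _ _ (hdiff p), hRt, hRy, mul_neg,
      sub_neg_eq_add, mul_sum, ← sum_add_distrib]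
    refine sum_eq_zero fun i hi => ?_
    rw [← add_sum_erase _ _ hi, ← mul_prod_erase _ _ hi]
    ring

/-- Coordinates on ℝ³ are `(t,x,y)` = indices `(0,1,2)`.
If the phases `Rⁱ` satisfy the pair of linearly degenerate systems (ld):
`Rⁱ_t = (Π_{k≠i} R^k) Rⁱ_x`, `Rⁱ_y = (Σ_{k≠i} R^k − Π_{k≠i} R^k) Rⁱ_x`, then
`v = −Σ_k R^k` and `w = Π_k R^k` solve the system (max). -/
theorem stmt13 (N : ℕ) (hN : 1 ≤ N)
    (R : (Fin 3 → ℝ) → (Fin N → ℝ)) (hR : ContDiff ℝ 1 R)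
    (hRt : ∀ (i : Fin N) (p : Fin 3 → ℝ),
        pd 0 (fun q => R q i) p =
          (∏ k ∈ Finset.univ.erase i, R p k) * pd 1 (fun q => R q i) p)
    (hRy : ∀ (i : Fin N) (p : Fin 3 → ℝ),
        pd 2 (fun q => R q i) p =
          ((∑ k ∈ Finset.univ.erase i, R p k) - ∏ k ∈ Finset.univ.erase i, R p k) *
            pd 1 (fun q => R q i) p) :
    (∀ p, pd 0 (fun q => -∑ k, R q k) p + pd 1 (fun q => ∏ k, R q k) p = 0) ∧
    (∀ p, pd 0 (fun q => ∏ k, R q k) p + pd 2 (fun q => ∏ k, R q k) p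
        + (-∑ k, R p k) * pd 1 (fun q => ∏ k, R q k) p
        - (∏ k, R p k) * pd 1 (fun q => -∑ k, R q k) p = 0) :=
  stmt13_general N R hR hRt hRy
end

section
/- Let U ⊆ ℝ² be open and connected, and let q, r, q̃, r̃ : U → ℝ be continuously differentiable and nowhere zero, with q + q̃ and r + r̃ also nowhere zero. Suppose that at every point of U the logarithmic gradients agree: (q̃ r̃)_v/(q̃ r̃) = (q r)_v/(q r), (q̃ r̃)_w/(q̃ r̃) = (q r)_w/(q r), ((q+q̃)(r+r̃))_v/((q+q̃)(r+r̃)) = (q r)_v/(q r), and ((q+q̃)(r+r̃))_w/((q+q̃)(r+r̃)) = (q r)_w/(q r). Then there exist constants λ, μ ∈ ℝ such that q̃ = λ q and r̃ = μ r on U. -/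
theorem HasFDerivAt.div {𝕜 E : Type*} [NontriviallyNormedField 𝕜] [NormedAddCommGroup E]
    [NormedSpace 𝕜 E] {c d : E → 𝕜} {c' d' : E →L[𝕜] 𝕜} {x : E}
    (hc : HasFDerivAt c c' x) (hd : HasFDerivAt d d' x) (hx : d x ≠ 0) :
    HasFDerivAt (fun y => c y / d y) ((d x)⁻¹ ^ 2 • (d x • c' - c x • d')) x := by
  have h : HasFDerivAt (fun y => c y * (d y)⁻¹) (c x • (-(d x ^ 2)⁻¹ • d') + (d x)⁻¹ • c') x :=
    hc.mul ((hasDerivAt_inv hx).comp_hasFDerivAt x hd)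
  simp only [div_eq_mul_inv]
  convert h using 1
  ext v
  simp only [smul_apply, sub_apply, add_apply, smul_eq_mul]
  field_simp
  ring

theorem hasFDerivAt_div_zero_of_pd_div_eq {n : ℕ} {f g : (Fin n → ℝ) → ℝ} {x : Fin n → ℝ}
    (hf : DifferentiableAt ℝ f x) (hg : DifferentiableAt ℝ g x) (hf0 : f x ≠ 0) (hg0 : g x ≠ 0)
    (h : ∀ i, pd i f x / f x = pd i g x / g x) :
    HasFDerivAt (fun y => f y / g y) (0 : (Fin n → ℝ) →L[ℝ] ℝ) x := by
  have hcross : g x • fderiv ℝ f x - f x • fderiv ℝ g x = 0 := by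
    refine ContinuousLinearMap.coe_injective <| (Pi.basisFun ℝ (Fin n)).ext fun i => ?_
    have hi : pd i f x * g x = pd i g x * f x := (div_eq_div_iff hf0 hg0).1 (h i)
    simp only [ContinuousLinearMap.toLinearMap_sub, ContinuousLinearMap.toLinearMap_smul,
      Pi.basisFun_apply, LinearMap.sub_apply, LinearMap.smul_apply, ContinuousLinearMap.coe_coe,
      smul_eq_mul, ContinuousLinearMap.toLinearMap_zero, LinearMap.zero_apply]
    unfold pd at hi
    linear_combination hi
  simpa [hcross] using hf.hasFDerivAt.div hg.hasFDerivAt hg0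

theorem exists_eq_const_mul_of_pd_div_eq {n : ℕ} {U : Set (Fin n → ℝ)} (hUo : IsOpen U)
    (hUc : IsPreconnected U) {f g : (Fin n → ℝ) → ℝ} (hf : DifferentiableOn ℝ f U)
    (hg : DifferentiableOn ℝ g U) (hf0 : ∀ x ∈ U, f x ≠ 0) (hg0 : ∀ x ∈ U, g x ≠ 0)
    (h : ∀ x ∈ U, ∀ i, pd i f x / f x = pd i g x / g x) :
    ∃ c : ℝ, ∀ x ∈ U, f x = c * g x := by
  have hderiv (x : Fin n → ℝ) (hx : x ∈ U) :
      HasFDerivAt (fun y => f y / g y) (0 : (Fin n → ℝ) →L[ℝ] ℝ) x :=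
    hasFDerivAt_div_zero_of_pd_div_eq (hf.differentiableAt (hUo.mem_nhds hx))
      (hg.differentiableAt (hUo.mem_nhds hx)) (hf0 x hx) (hg0 x hx) (h x hx)
  obtain ⟨c, hc⟩ := hUo.exists_is_const_of_fderiv_eq_zero hUc
    (fun x hx => (hderiv x hx).differentiableAt.differentiableWithinAt)
    fun x hx => (hderiv x hx).fderiv
  exact ⟨c, fun x hx => by rw [← hc x hx, div_mul_cancel₀ _ (hg0 x hx)]⟩

theorem IsPreconnected.eq_of_add_eq_of_mul_eq {X K : Type*} [TopologicalSpace X] [CommRing K]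
    [NoZeroDivisors K] [TopologicalSpace K] [T1Space K] {S : Set X} (hS : IsPreconnected S)
    {u w : X → K} (hu : ContinuousOn u S) {k c : K} (hsum : ∀ x ∈ S, u x + w x = k)
    (hprod : ∀ x ∈ S, u x * w x = c) {x y : X} (hx : x ∈ S) (hy : y ∈ S) : u x = u y := by
  refine hS.constant_of_mapsTo (T := {u y, w y}) (Set.toFinite _).isDiscrete hu
    (fun z hz => ?_) hx hy
  -- `u y` and `w y` are the two roots of `X² - k X + c`, and `u z` is a root too
  have hroot : (u z - u y) * (u z - w y) = 0 := by
    linear_combination u z * hsum z hz - u z * hsum y hy + hprod y hy - hprod z hz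
  rcases mul_eq_zero.1 hroot with h | h
  · exact Or.inl (sub_eq_zero.1 h)
  · exact Or.inr (sub_eq_zero.1 h)

/-- Coordinates on ℝ² are `(v,w)` with indices `(0,1)`.  If `q, r, q̃, r̃` are C¹ and
nowhere zero on an open connected set `U`, with `q+q̃` and `r+r̃` also nowhere zero, and
the logarithmic gradients of `q̃r̃`, `qr` and `(q+q̃)(r+r̃)` all agree on `U`, then
`q̃ = λq` and `r̃ = μr` on `U` for some constants `λ, μ`. -/
theorem stmt17 (U : Set (Fin 2 → ℝ)) (hUo : IsOpen U) (hUc : IsConnected U)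
    (q r qt rt : (Fin 2 → ℝ) → ℝ)
    (hq : ContDiffOn ℝ 1 q U) (hr : ContDiffOn ℝ 1 r U)
    (hqt : ContDiffOn ℝ 1 qt U) (hrt : ContDiffOn ℝ 1 rt U)
    (hq0 : ∀ x ∈ U, q x ≠ 0) (hr0 : ∀ x ∈ U, r x ≠ 0)
    (hqt0 : ∀ x ∈ U, qt x ≠ 0) (hrt0 : ∀ x ∈ U, rt x ≠ 0)
    (hsumq0 : ∀ x ∈ U, q x + qt x ≠ 0) (hsumr0 : ∀ x ∈ U, r x + rt x ≠ 0)
    (h1v : ∀ x ∈ U, pd 0 (fun y => qt y * rt y) x / (qt x * rt x) =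
        pd 0 (fun y => q y * r y) x / (q x * r x))
    (h1w : ∀ x ∈ U, pd 1 (fun y => qt y * rt y) x / (qt x * rt x) =
        pd 1 (fun y => q y * r y) x / (q x * r x))
    (h2v : ∀ x ∈ U, pd 0 (fun y => (q y + qt y) * (r y + rt y)) x /
          ((q x + qt x) * (r x + rt x)) =
        pd 0 (fun y => q y * r y) x / (q x * r x))
    (h2w : ∀ x ∈ U, pd 1 (fun y => (q y + qt y) * (r y + rt y)) x /
          ((q x + qt x) * (r x + rt x)) =
        pd 1 (fun y => q y * r y) x / (q x * r x)) :
    ∃ lam mu : ℝ, ∀ x ∈ U, qt x = lam * q x ∧ rt x = mu * r x := by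
  obtain ⟨x₀, hx₀⟩ := hUc.nonempty
  have hd {f : (Fin 2 → ℝ) → ℝ} (hf : ContDiffOn ℝ 1 f U) : DifferentiableOn ℝ f U :=
    hf.differentiableOn one_ne_zero
  have hqr0 (x) (hx : x ∈ U) := mul_ne_zero (hq0 x hx) (hr0 x hx)
  obtain ⟨c, hc⟩ := exists_eq_const_mul_of_pd_div_eq (f := fun y => qt y * rt y)
    (g := fun y => q y * r y) hUo hUc.isPreconnected
    ((hd hqt).mul (hd hrt)) ((hd hq).mul (hd hr)) (fun x hx => mul_ne_zero (hqt0 x hx) (hrt0 x hx))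
    hqr0 fun x hx => Fin.forall_fin_two.2 ⟨h1v x hx, h1w x hx⟩
  obtain ⟨c', hc'⟩ := exists_eq_const_mul_of_pd_div_eq
    (f := fun y => (q y + qt y) * (r y + rt y)) (g := fun y => q y * r y) hUo hUc.isPreconnected
    (((hd hq).add (hd hqt)).mul ((hd hr).add (hd hrt))) ((hd hq).mul (hd hr))
    (fun x hx => mul_ne_zero (hsumq0 x hx) (hsumr0 x hx))
    hqr0 fun x hx => Fin.forall_fin_two.2 ⟨h2v x hx, h2w x hx⟩
  have hsum (x) (hx : x ∈ U) : qt x / q x + rt x / r x = c' - 1 - c := by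
    field_simp [hq0 x hx, hr0 x hx]
    linear_combination hc' x hx - hc x hx
  have hprod (x) (hx : x ∈ U) : qt x / q x * (rt x / r x) = c := by
    field_simp [hq0 x hx, hr0 x hx]
    linear_combination hc x hx
  have hu (x) (hx : x ∈ U) : qt x / q x = qt x₀ / q x₀ :=
    hUc.isPreconnected.eq_of_add_eq_of_mul_eq (u := fun y => qt y / q y)
      (hqt.continuousOn.div hq.continuousOn hq0) hsum hprod hx hx₀
  have hw (x) (hx : x ∈ U) : rt x / r x = rt x₀ / r x₀ :=
    hUc.isPreconnected.eq_of_add_eq_of_mul_eq (u := fun y => rt y / r y)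
      (hrt.continuousOn.div hr.continuousOn hr0) (fun x hx => (add_comm _ _).trans (hsum x hx))
      (fun x hx => (mul_comm _ _).trans (hprod x hx)) hx hx₀
  refine ⟨qt x₀ / q x₀, rt x₀ / r x₀, fun x hx => ⟨?_, ?_⟩⟩
  · rw [← hu x hx, div_mul_cancel₀ _ (hq0 x hx)]
  · rw [← hw x hx, div_mul_cancel₀ _ (hr0 x hx)]
end
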